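/- Let λ be the unique longest element of D_μ. Let w = Σ_{u ∈ D_μ} c_u e_u be a nonzero vector of V, let u₀ be an element of minimal length among those u with c_u ≠ 0, set ω = λ u₀⁻¹, and fix a reduced expression ω = s_{k₁} ⋯ s_{k_m}. Then U_{k₁} ∘ ⋯ ∘ U_{k_m}(w) = c_{u₀} · e_λ. In particular, every nonzero invariant subspace of V contains e_λ. -/

import Mathlib

/-!
On `D_μ` the Coxeter length counts only inversions between different blocks, and the longest
element `λ` inverts every such pair: an uninverted one can be chosen adjacent in value, and
swapping those values gives a longer element of `D_μ`. Counting cross-block pairs by whether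
`u` inverts them gives `ℓ(λ) = ℓ(λ u⁻¹) + ℓ(u)` for `u ∈ D_μ`.

A word `s_{k₁} ⋯ s_{k_m}` sends `e_u` to `e_{s_{k₁} ⋯ s_{k_m} u}` if this lies in `D_μ` and has
length `ℓ(u) + m`, and to `0` otherwise. Applied to a reduced word for `λ u₀⁻¹`, this keeps
`e_{u₀} ↦ e_λ` and kills every other `e_u` in the support of `w`.
-/

open scoped Classical

noncomputable section

/-- The Coxeter length of a permutation of `Fin n`: its number of inversions. -/
def permLen {n : ℕ} (w : Equiv.Perm (Fin n)) : ℕ :=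
  (Finset.univ.filter fun p : Fin n × Fin n => p.1 < p.2 ∧ w p.2 < w p.1).card

/-- The partial sums (block offsets) of a composition `μ`. -/
def off (μ : ℕ → ℕ) (t : ℕ) : ℕ := ∑ s ∈ Finset.range t, μ s

/-- `p` and `q` lie in the same (consecutive) block of the composition
`(μ 0, …, μ (r-1))`. -/
def sameBlock (r : ℕ) (μ : ℕ → ℕ) (p q : ℕ) : Prop :=
  ∃ t < r, off μ t ≤ p ∧ p < off μ (t + 1) ∧ off μ t ≤ q ∧ q < off μ (t + 1)

/-- The set `D_μ` of minimal-length representatives of the left cosets `u • S_μ`: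
permutations increasing on each block of `μ`. -/
def Dmu (n r : ℕ) (μ : ℕ → ℕ) : Set (Equiv.Perm (Fin n)) :=
  {u | ∀ p q : Fin n, p < q → sameBlock r μ (p : ℕ) (q : ℕ) → u p < u q}

/-- The adjacent transposition `s_k = (k, k+1)` (0-indexed), as a permutation
of `Fin n` (junk value `1` if out of range). -/
def adjSwap (n k : ℕ) : Equiv.Perm (Fin n) :=
  if h : k + 1 < n then Equiv.swap ⟨k, Nat.lt_of_succ_lt h⟩ ⟨k + 1, h⟩ else 1

/-- The index type for the basis `{e_u : u ∈ D_μ}` of the vector space `V`. -/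
abbrev DmuSub (n r : ℕ) (μ : ℕ → ℕ) : Type := {u : Equiv.Perm (Fin n) // u ∈ Dmu n r μ}

/-- The defining property of the family of `K`-linear operators
`U_k : V → V` on `V = (DmuSub n r μ → K)`:
`U_k (e_u) = e_{s_k u}` if `ℓ(s_k u) = ℓ(u) + 1` and `s_k u ∈ D_μ`, and
`U_k (e_u) = 0` otherwise (here `e_u = Pi.single u 1`). -/
def IsUFamily (K : Type*) [Field K] (n r : ℕ) (μ : ℕ → ℕ)
    (U : ℕ → ((DmuSub n r μ → K) →ₗ[K] (DmuSub n r μ → K))) : Prop :=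
  ∀ k, k + 1 < n → ∀ u : DmuSub n r μ,
    U k (Pi.single u (1 : K)) =
      if h : permLen (adjSwap n k * u.1) = permLen u.1 + 1 ∧
          adjSwap n k * u.1 ∈ Dmu n r μ
      then Pi.single (⟨adjSwap n k * u.1, h.2⟩ : DmuSub n r μ) (1 : K) else 0

open Equiv

section

variable {n : ℕ}

lemma swap_lt_swap_iff {a b c d : Fin n} (hab : (b : ℕ) = a + 1)
    (h₁ : ¬(c = a ∧ d = b)) (h₂ : ¬(c = b ∧ d = a)) :
    swap a b c < swap a b d ↔ c < d := by
  simp only [swap_apply_def, Fin.lt_def, Fin.ext_iff] at *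
  split_ifs <;> omega

lemma permLen_swap_mul_of_lt {a b : Fin n} (hab : (b : ℕ) = a + 1) {x : Perm (Fin n)}
    {p q : Fin n} (hp : x p = a) (hq : x q = b) (hpq : p < q) :
    permLen (swap a b * x) = permLen x + 1 := by
  have hba : a < b := by simp [Fin.lt_def, hab]
  unfold permLen
  rw [← Finset.card_insert_of_notMem (a := (p, q))]
  · congr 1
    ext ⟨i, j⟩
    rw [Finset.mem_insert, Finset.mem_filter, Finset.mem_filter]
    simp only [Finset.mem_univ, true_and, Prod.mk.injEq, Perm.mul_apply]
    by_cases hij : i = p ∧ j = q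
    · obtain ⟨rfl, rfl⟩ := hij
      simp [hp, hq, hpq, hba]
    by_cases hji : i = q ∧ j = p
    · obtain ⟨rfl, rfl⟩ := hji
      simp only [hij, false_or]
      exact ⟨fun h => absurd hpq (lt_asymm h.1), fun h => absurd hpq (lt_asymm h.1)⟩
    rw [swap_lt_swap_iff hab, or_iff_right hij]
    · rintro ⟨h1, h2⟩; exact hji ⟨x.injective (h2.trans hq.symm), x.injective (h1.trans hp.symm)⟩
    · rintro ⟨h1, h2⟩; exact hij ⟨x.injective (h2.trans hp.symm), x.injective (h1.trans hq.symm)⟩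
  · simp [hp, hq, hba.not_gt]

lemma permLen_swap_mul_of_gt {a b : Fin n} (hab : (b : ℕ) = a + 1) {x : Perm (Fin n)}
    {p q : Fin n} (hp : x p = a) (hq : x q = b) (hqp : q < p) :
    permLen (swap a b * x) + 1 = permLen x := by
  have := permLen_swap_mul_of_lt hab (x := swap a b * x) (p := q) (q := p)
    (by simp [hq]) (by simp [hp]) hqp
  rwa [swap_mul_self_mul, eq_comm] at this

lemma swap_mul_lt_swap_mul_iff {a b : Fin n} (hab : (b : ℕ) = a + 1) {x : Perm (Fin n)}
    {p q i j : Fin n} (hp : x p = a) (hq : x q = b) (hpq : p < q) (hij : i < j)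
    (hne : ¬(i = p ∧ j = q)) :
    (swap a b * x) i < (swap a b * x) j ↔ x i < x j := by
  refine swap_lt_swap_iff hab ?_ ?_
  · rintro ⟨hi, hj⟩
    exact hne ⟨x.injective (hi.trans hp.symm), x.injective (hj.trans hq.symm)⟩
  · rintro ⟨hi, hj⟩
    obtain rfl := x.injective (hi.trans hq.symm)
    obtain rfl := x.injective (hj.trans hp.symm)
    exact lt_asymm hij hpq

lemma permLen_swap_mul_le {a b : Fin n} (hab : (b : ℕ) = a + 1) (x : Perm (Fin n)) :
    permLen (swap a b * x) ≤ permLen x + 1 := by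
  have hp : x (x⁻¹ a) = a := by simp
  have hq : x (x⁻¹ b) = b := by simp
  rcases lt_or_gt_of_ne (x⁻¹.injective.ne (Fin.ne_of_val_ne (by omega : (a : ℕ) ≠ b)))
    with h | h
  · exact (permLen_swap_mul_of_lt hab hp hq h).le
  · have := permLen_swap_mul_of_gt hab hp hq h
    omega

variable {r : ℕ} {μ : ℕ → ℕ}

lemma swap_mul_mem_Dmu {a b : Fin n} (hab : (b : ℕ) = a + 1) {x : Perm (Fin n)}
    (hx : x ∈ Dmu n r μ) {p q : Fin n} (hp : x p = a) (hq : x q = b) (hpq : p < q)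
    (hcross : ¬sameBlock r μ p q) : swap a b * x ∈ Dmu n r μ := by
  intro i j hij hblock
  rw [swap_mul_lt_swap_mul_iff hab hp hq hpq hij]
  · exact hx i j hij hblock
  · rintro ⟨rfl, rfl⟩
    exact hcross hblock

lemma mem_Dmu_of_swap_mul {a b : Fin n} (hab : (b : ℕ) = a + 1) {x : Perm (Fin n)}
    (hx : swap a b * x ∈ Dmu n r μ) (hlen : permLen (swap a b * x) = permLen x + 1) :
    x ∈ Dmu n r μ := by
  have hp : x (x⁻¹ a) = a := by simp
  have hq : x (x⁻¹ b) = b := by simp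
  rcases lt_or_gt_of_ne (x⁻¹.injective.ne (Fin.ne_of_val_ne (by omega : (a : ℕ) ≠ b)))
    with hpq | hqp
  · intro i j hij hblock
    by_cases hne : i = x⁻¹ a ∧ j = x⁻¹ b
    · obtain ⟨rfl, rfl⟩ := hne
      simp [Fin.lt_def, hab]
    · exact (swap_mul_lt_swap_mul_iff hab hp hq hpq hij hne).1 (hx i j hij hblock)
  · have := permLen_swap_mul_of_gt hab hp hq hqp
    omega

lemma adjSwap_eq_swap {k : ℕ} (hk : k + 1 < n) :
    adjSwap n k = swap ⟨k, k.lt_succ_self.trans hk⟩ ⟨k + 1, hk⟩ :=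
  dif_pos hk

lemma permLen_adjSwap_mul_le (k : ℕ) (x : Perm (Fin n)) :
    permLen (adjSwap n k * x) ≤ permLen x + 1 := by
  by_cases hk : k + 1 < n
  · rw [adjSwap_eq_swap hk]
    exact permLen_swap_mul_le rfl x
  · simp [adjSwap, hk]

lemma mem_Dmu_of_adjSwap_mul {k : ℕ} {x : Perm (Fin n)} (hx : adjSwap n k * x ∈ Dmu n r μ)
    (hlen : permLen (adjSwap n k * x) = permLen x + 1) : x ∈ Dmu n r μ := by
  by_cases hk : k + 1 < n
  · rw [adjSwap_eq_swap hk] at hx hlen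
    exact mem_Dmu_of_swap_mul rfl hx hlen
  · simp [adjSwap, hk] at hlen

lemma eq_one_of_forall_inv_lt_inv {x : Perm (Fin n)}
    (h : ∀ k (hk : k + 1 < n), x⁻¹ ⟨k, k.lt_succ_self.trans hk⟩ < x⁻¹ ⟨k + 1, hk⟩) :
    x = 1 := by
  obtain _ | m := n
  · exact Subsingleton.elim _ _
  have hmono : StrictMono (x⁻¹ : Perm (Fin (m + 1))) :=
    Fin.strictMono_iff_lt_succ.2 fun i => h i (by omega)
  have hid : ∀ i, x⁻¹ i = i := fun i =>
    Fin.ext (Fin.coe_orderIso_apply (hmono.orderIsoOfSurjective _ x⁻¹.surjective) i)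
  rw [← inv_eq_one]
  exact Equiv.ext hid

lemma permLen_one : permLen (1 : Perm (Fin n)) = 0 :=
  Finset.card_eq_zero.2 (Finset.filter_eq_empty_iff.2 fun _ _ h => lt_asymm h.1 h.2)

lemma exists_reduced_word (x : Perm (Fin n)) :
    ∃ L : List ℕ, (∀ k ∈ L, k + 1 < n) ∧ (L.map (adjSwap n)).prod = x ∧
      L.length = permLen x := by
  induction hN : permLen x using Nat.strong_induction_on generalizing x with
  | _ N ih =>
    by_cases hdesc : ∃ k, ∃ hk : k + 1 < n, x⁻¹ ⟨k + 1, hk⟩ < x⁻¹ ⟨k, k.lt_succ_self.trans hk⟩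
    · obtain ⟨k, hk, hqp⟩ := hdesc
      have hlen := permLen_swap_mul_of_gt (x := x) (a := ⟨k, k.lt_succ_self.trans hk⟩)
        (b := ⟨k + 1, hk⟩) rfl (by simp) (by simp) hqp
      rw [← adjSwap_eq_swap hk] at hlen
      obtain ⟨L, hL, hprod, hlenL⟩ := ih _ (by omega) (adjSwap n k * x) rfl
      refine ⟨k :: L, ?_, ?_, ?_⟩
      · simpa [hk] using hL
      · rw [List.map_cons, List.prod_cons, hprod, adjSwap_eq_swap hk, swap_mul_self_mul]
      · simp only [List.length_cons]
        omega
    · simp only [not_exists, not_lt] at hdesc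
      have hx : x = 1 := eq_one_of_forall_inv_lt_inv fun k hk =>
        (hdesc k hk).lt_of_ne (x⁻¹.injective.ne (by simp))
      subst hx
      exact ⟨[], by simp, rfl, by rw [← hN, permLen_one]; rfl⟩

lemma off_mono : Monotone (off μ) := fun _ _ h =>
  Finset.sum_le_sum_of_subset (Finset.range_subset_range.2 h)

lemma sameBlock_trans {p q s : ℕ} (hpq : sameBlock r μ p q) (hqs : sameBlock r μ q s) :
    sameBlock r μ p s := by
  obtain ⟨t, ht, hp₁, hp₂, hq₁, hq₂⟩ := hpq
  obtain ⟨t', -, hq₁', hq₂', hs₁, hs₂⟩ := hqs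
  obtain rfl : t = t' := by
    rcases Nat.lt_trichotomy t t' with h | h | h
    · have := off_mono (μ := μ) (show t + 1 ≤ t' by omega); omega
    · exact h
    · have := off_mono (μ := μ) (show t' + 1 ≤ t by omega); omega
  exact ⟨t, ht, hp₁, hp₂, hs₁, hs₂⟩

/-- `c ≤ a ∨ sameBlock r μ a c` says that the block of `c` does not come after that of `a`. -/
lemma le_or_sameBlock_trans {a b c : ℕ} (hab : b ≤ a ∨ sameBlock r μ a b)
    (hbc : c ≤ b ∨ sameBlock r μ b c) : c ≤ a ∨ sameBlock r μ a c := by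
  by_cases hca : c ≤ a
  · exact Or.inl hca
  right
  rcases hab with hab | hab <;> rcases hbc with hbc | hbc
  · omega
  · obtain ⟨t, ht, hb₁, -, hc₁, hc₂⟩ := hbc
    exact ⟨t, ht, by omega, by omega, hc₁, hc₂⟩
  · obtain ⟨t, ht, ha₁, ha₂, -, hb₂⟩ := hab
    exact ⟨t, ht, ha₁, ha₂, by omega, by omega⟩
  · exact sameBlock_trans hab hbc

/-- Walking through the values `x i, x i + 1, …, x j`, the positions cannot move to a later
block unless some step is an ascent between different blocks. -/
lemma exists_adjacent_ascent_of_not_sameBlock (x : Perm (Fin n)) {i j : Fin n} (hij : i < j)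
    (hcross : ¬sameBlock r μ i j) (hx : x i < x j) :
    ∃ p q : Fin n, p < q ∧ ¬sameBlock r μ p q ∧ (x q : ℕ) = x p + 1 := by
  by_contra! h
  have key : ∀ d (hd : (x i : ℕ) + d < n),
      (x⁻¹ ⟨x i + d, hd⟩ : ℕ) ≤ i ∨ sameBlock r μ i (x⁻¹ ⟨x i + d, hd⟩) := by
    intro d
    induction d with
    | zero => exact fun _ => Or.inl (by simp)
    | succ d ih =>
      intro hd
      refine le_or_sameBlock_trans (ih (by omega)) ?_
      by_contra! hstep
      exact h _ _ (Fin.lt_def.2 hstep.1) hstep.2 (by simp [add_assoc])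
  have hx' : (x i : ℕ) < x j := hx
  have hj := key (x j - x i) (by omega)
  rw [show (⟨x i + (x j - x i), by omega⟩ : Fin n) = x j by ext; simp only; omega,
    Perm.inv_eq_iff_eq.2 rfl] at hj
  exact hcross (hj.resolve_left (not_le.2 hij))

/-- Otherwise an adjacent cross-block ascent `(p, q)` of `λ` could be swapped, giving a longer
element of `D_μ`. -/
lemma apply_lt_apply_of_not_sameBlock {lam : Perm (Fin n)} (hlam : lam ∈ Dmu n r μ)
    (hmax : ∀ u ∈ Dmu n r μ, u ≠ lam → permLen u < permLen lam) {p q : Fin n} (hpq : p < q)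
    (hcross : ¬sameBlock r μ p q) : lam q < lam p := by
  by_contra hle
  obtain ⟨p', q', hpq', hcross', hval⟩ := exists_adjacent_ascent_of_not_sameBlock lam hpq hcross
    ((not_lt.1 hle).lt_of_ne (lam.injective.ne hpq.ne))
  have hlen := permLen_swap_mul_of_lt hval rfl rfl hpq'
  have hne : swap (lam p') (lam q') * lam ≠ lam := fun h => by simp [h] at hlen
  have := hmax _ (swap_mul_mem_Dmu hval hlam rfl rfl hpq' hcross') hne
  omega

variable (n r μ) in
def crossPairs : Finset (Fin n × Fin n) :=
  Finset.univ.filter fun p => p.1 < p.2 ∧ ¬sameBlock r μ p.1 p.2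

lemma permLen_eq_card_crossPairs_filter {u : Perm (Fin n)} (hu : u ∈ Dmu n r μ) :
    permLen u = ((crossPairs n r μ).filter fun p => u p.2 < u p.1).card := by
  unfold permLen crossPairs
  congr 1
  ext ⟨i, j⟩
  simp only [Finset.mem_filter, Finset.mem_univ, true_and]
  exact ⟨fun ⟨hij, hu'⟩ => ⟨⟨hij, fun hb => (hu i j hij hb).not_gt hu'⟩, hu'⟩,
    fun ⟨⟨hij, _⟩, hu'⟩ => ⟨hij, hu'⟩⟩

lemma permLen_mul_inv_eq_card_crossPairs_filter {lam u : Perm (Fin n)}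
    (hlam : lam ∈ Dmu n r μ) (hrev : ∀ p q : Fin n, p < q → ¬sameBlock r μ p q → lam q < lam p)
    (hu : u ∈ Dmu n r μ) :
    permLen (lam * u⁻¹) = ((crossPairs n r μ).filter fun p => u p.1 < u p.2).card := by
  unfold permLen crossPairs
  refine Finset.card_equiv (u⁻¹.prodCongr u⁻¹) fun ⟨a, b⟩ => ?_
  obtain ⟨p, rfl⟩ := u.surjective a
  obtain ⟨q, rfl⟩ := u.surjective b
  rw [Finset.mem_filter, Finset.mem_filter, Finset.mem_filter]
  simp only [Finset.mem_univ, true_and, Equiv.prodCongr_apply, Prod.map_apply, Perm.mul_apply,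
    Perm.inv_eq_iff_eq.2 rfl]
  refine ⟨fun ⟨hu', hlt⟩ => ?_, fun ⟨⟨hpq, hcross⟩, hu'⟩ => ⟨hu', hrev p q hpq hcross⟩⟩
  rcases lt_trichotomy p q with hpq | rfl | hqp
  · exact ⟨⟨hpq, fun hb => (hlam p q hpq hb).not_gt hlt⟩, hu'⟩
  · exact absurd hlt (lt_irrefl _)
  · by_cases hb : sameBlock r μ q p
    · exact absurd (hu q p hqp hb) hu'.not_gt
    · exact absurd (hrev q p hqp hb) hlt.not_gt

lemma permLen_eq_permLen_mul_inv_add {lam : Perm (Fin n)} (hlam : lam ∈ Dmu n r μ)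
    (hmax : ∀ u ∈ Dmu n r μ, u ≠ lam → permLen u < permLen lam) {u : Perm (Fin n)}
    (hu : u ∈ Dmu n r μ) : permLen lam = permLen (lam * u⁻¹) + permLen u := by
  have hrev : ∀ p q : Fin n, p < q → ¬sameBlock r μ p q → lam q < lam p :=
    fun _ _ => apply_lt_apply_of_not_sameBlock hlam hmax
  have hcross : ∀ p ∈ crossPairs n r μ, p.1 < p.2 ∧ ¬sameBlock r μ p.1 p.2 := fun p hp =>
    (Finset.mem_filter.1 hp).2
  rw [permLen_mul_inv_eq_card_crossPairs_filter hlam hrev hu, permLen_eq_card_crossPairs_filter hu,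
    permLen_eq_card_crossPairs_filter hlam,
    Finset.filter_true_of_mem fun p hp => hrev _ _ (hcross p hp).1 (hcross p hp).2,
    ← Finset.card_filter_add_card_filter_not (fun p : Fin n × Fin n => u p.1 < u p.2)]
  congr 2
  refine Finset.filter_congr fun p hp => ⟨fun h => ?_, fun h => h.not_gt⟩
  exact (not_lt.1 h).lt_of_ne (u.injective.ne (hcross p hp).1.ne')

lemma permLen_listProd_mul_le (L : List ℕ) (u : Perm (Fin n)) :
    permLen ((L.map (adjSwap n)).prod * u) ≤ permLen u + L.length := by
  induction L with
  | nil => simp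
  | cons k L ih =>
    rw [List.map_cons, List.prod_cons, mul_assoc, List.length_cons]
    have := permLen_adjSwap_mul_le k ((L.map (adjSwap n)).prod * u)
    omega

lemma List.foldr_apply_eq_prod_map {R M ι : Type*} [Semiring R] [AddCommMonoid M] [Module R M]
    (U : ι → Module.End R M) (L : List ι) (v : M) :
    L.foldr (fun i v => U i v) v = (L.map U).prod v := by
  induction L with
  | nil => rfl
  | cons i L ih => simp [ih, Module.End.mul_apply]

lemma Submodule.listProd_map_apply_mem {R M ι : Type*} [Semiring R] [AddCommMonoid M]
    [Module R M] (W : Submodule R M) (U : ι → Module.End R M) {L : List ι}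
    (hW : ∀ i ∈ L, ∀ v ∈ W, U i v ∈ W) {v : M} (hv : v ∈ W) : (L.map U).prod v ∈ W := by
  induction L with
  | nil => exact hv
  | cons i L ih =>
    rw [List.map_cons, List.prod_cons, Module.End.mul_apply]
    exact hW i List.mem_cons_self _ (ih fun j hj => hW j (List.mem_cons_of_mem i hj))

section Operators

variable {K : Type*} [Field K]

variable (K) in
/-- The basis vector `e_u`, extended by `0` to permutations `u ∉ D_μ`. -/
def basisVec (u : Perm (Fin n)) : DmuSub n r μ → K :=
  if h : u ∈ Dmu n r μ then Pi.single ⟨u, h⟩ 1 else 0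

lemma basisVec_val (u : DmuSub n r μ) : basisVec K u.1 = Pi.single u (1 : K) :=
  dif_pos u.2

variable {U : ℕ → ((DmuSub n r μ → K) →ₗ[K] (DmuSub n r μ → K))}

lemma IsUFamily.apply_basisVec (hU : IsUFamily K n r μ U) {k : ℕ} (hk : k + 1 < n)
    (u : Perm (Fin n)) :
    U k (basisVec K u) =
      if permLen (adjSwap n k * u) = permLen u + 1 then basisVec K (adjSwap n k * u) else 0 := by
  by_cases hu : u ∈ Dmu n r μ
  · rw [basisVec, dif_pos hu, hU k hk ⟨u, hu⟩]
    by_cases hlen : permLen (adjSwap n k * u) = permLen u + 1 <;>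
      by_cases hmem : adjSwap n k * u ∈ Dmu n r μ <;> simp [basisVec, hlen, hmem]
  · rw [basisVec, dif_neg hu, map_zero]
    split_ifs with hlen
    · rw [basisVec, dif_neg fun h => hu (mem_Dmu_of_adjSwap_mul h hlen)]
    · rfl

lemma IsUFamily.listProd_apply_basisVec (hU : IsUFamily K n r μ U) {L : List ℕ}
    (hL : ∀ k ∈ L, k + 1 < n) (u : Perm (Fin n)) :
    (L.map U).prod (basisVec K u) =
      if permLen ((L.map (adjSwap n)).prod * u) = permLen u + L.length
      then basisVec K ((L.map (adjSwap n)).prod * u) else 0 := by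
  induction L with
  | nil => simp
  | cons k L ih =>
    have hk := hL k List.mem_cons_self
    rw [List.map_cons, List.prod_cons, Module.End.mul_apply,
      ih fun j hj => hL j (List.mem_cons_of_mem k hj), List.map_cons, List.prod_cons, mul_assoc,
      List.length_cons]
    by_cases hlen : permLen ((L.map (adjSwap n)).prod * u) = permLen u + L.length
    · rw [if_pos hlen, hU.apply_basisVec hk, hlen, add_assoc]
    · have := permLen_listProd_mul_le L u
      have := permLen_adjSwap_mul_le k ((L.map (adjSwap n)).prod * u)
      rw [if_neg hlen, map_zero, if_neg (by omega)]

/-- Only `e_{u₀}` survives: any other `e_u` with `c_u ≠ 0` would be sent to a basis vector of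
`D_μ` of length `ℓ(u) + ℓ(λ u₀⁻¹) ≥ ℓ(λ)`, which must be `e_λ` itself, forcing `u = u₀`. -/
lemma IsUFamily.listProd_apply_of_minimal (hU : IsUFamily K n r μ U)
    {lam : Perm (Fin n)} (hlam : lam ∈ Dmu n r μ)
    (hmax : ∀ u ∈ Dmu n r μ, u ≠ lam → permLen u < permLen lam)
    (w : DmuSub n r μ → K) (u₀ : DmuSub n r μ)
    (hmin : ∀ v : DmuSub n r μ, w v ≠ 0 → permLen u₀.1 ≤ permLen v.1)
    {L : List ℕ} (hLk : ∀ k ∈ L, k + 1 < n)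
    (hLprod : (L.map (adjSwap n)).prod = lam * u₀.1⁻¹)
    (hLred : L.length = permLen (lam * u₀.1⁻¹)) :
    (L.map U).prod w = w u₀ • Pi.single (⟨lam, hlam⟩ : DmuSub n r μ) (1 : K) := by
  set P := (L.map (adjSwap n)).prod
  have hPu₀ : P * u₀.1 = lam := by rw [hLprod, inv_mul_cancel_right]
  have hlen : permLen lam = permLen u₀.1 + L.length := by
    rw [hLred, permLen_eq_permLen_mul_inv_add hlam hmax u₀.2, add_comm]
  have hunique : ∀ u : DmuSub n r μ, w u ≠ 0 → permLen (P * u.1) = permLen u.1 + L.length →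
      P * u.1 ∈ Dmu n r μ → u = u₀ := by
    intro u hwu hPu hmem
    by_cases heq : P * u.1 = lam
    · exact Subtype.ext (mul_left_cancel (heq.trans hPu₀.symm))
    · have := hmax _ hmem heq
      have := hmin u hwu
      omega
  have hsingle : ∀ u : DmuSub n r μ, Pi.single u (w u) = w u • basisVec K u.1 := fun u => by
    rw [basisVec_val, ← Pi.single_smul', smul_eq_mul, mul_one]
  conv_lhs => rw [← Finset.univ_sum_single w]
  rw [map_sum, Finset.sum_eq_single u₀ _ (fun h => absurd (Finset.mem_univ u₀) h)]
  · rw [hsingle, map_smul, hU.listProd_apply_basisVec hLk, hPu₀, if_pos hlen, basisVec,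
      dif_pos hlam]
  intro u _ hne
  rw [hsingle, map_smul, hU.listProd_apply_basisVec hLk]
  by_cases hwu : w u = 0
  · rw [hwu, zero_smul]
  split_ifs with hPu
  · rw [basisVec, dif_neg fun hmem => hne (hunique u hwu hPu hmem), smul_zero]
  · rw [smul_zero]

end Operators

end

theorem stmt11_general (K : Type*) [Field K] {n r : ℕ} (μ : ℕ → ℕ)
    (U : ℕ → ((DmuSub n r μ → K) →ₗ[K] (DmuSub n r μ → K)))
    (hU : IsUFamily K n r μ U)
    (lam : Equiv.Perm (Fin n)) (hlam : lam ∈ Dmu n r μ)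
    (hmax : ∀ u ∈ Dmu n r μ, u ≠ lam → permLen u < permLen lam)
    (w : DmuSub n r μ → K) (u₀ : DmuSub n r μ)
    (hmin : ∀ v : DmuSub n r μ, w v ≠ 0 → permLen u₀.1 ≤ permLen v.1)
    (L : List ℕ) (hLk : ∀ k ∈ L, k + 1 < n)
    (hLprod : (L.map (adjSwap n)).prod = lam * u₀.1⁻¹)
    (hLred : L.length = permLen (lam * u₀.1⁻¹)) :
    L.foldr (fun k v => U k v) w =
      w u₀ • (Pi.single (⟨lam, hlam⟩ : DmuSub n r μ) (1 : K) : DmuSub n r μ → K) ∧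
    ∀ W : Submodule K (DmuSub n r μ → K),
      (∀ k, k + 1 < n → ∀ v ∈ W, U k v ∈ W) → W ≠ ⊥ →
      Pi.single (⟨lam, hlam⟩ : DmuSub n r μ) (1 : K) ∈ W := by
  refine ⟨?_, fun W hW hW₀ => ?_⟩
  · rw [List.foldr_apply_eq_prod_map]
    exact hU.listProd_apply_of_minimal hlam hmax w u₀ hmin hLk hLprod hLred
  obtain ⟨v, hvW, hv⟩ := Submodule.exists_mem_ne_zero_of_ne_bot hW₀
  obtain ⟨i, hi⟩ := Function.ne_iff.1 hv
  obtain ⟨v₀, hv₀, hmin'⟩ := (Finset.univ.filter fun u => v u ≠ 0).exists_min_image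
    (fun u : DmuSub n r μ => permLen u.1) ⟨i, by simpa using hi⟩
  obtain ⟨L', hL'k, hL'prod, hL'red⟩ := exists_reduced_word (lam * v₀.1⁻¹)
  have hmem := W.listProd_map_apply_mem U (fun k hk => hW k (hL'k k hk)) hvW
  rw [hU.listProd_apply_of_minimal hlam hmax v v₀ (fun u hu => hmin' u (by simpa using hu))
    hL'k hL'prod hL'red] at hmem
  simpa [smul_smul, (Finset.mem_filter.1 hv₀).2] using W.smul_mem (v v₀)⁻¹ hmem

/-- the key computation `τ_ω ⬝ m = k_{u₀} τ_λ ⊗ v` in the proof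
of Lemma 1.3(iii) of the paper: let `λ` be the unique longest element of
`D_μ`, let `w = ∑ c_u e_u` be a nonzero vector of `V` (a function
`w : DmuSub → K`, with `c_u = w u`), let `u₀` be of minimal length among the
`u` with `c_u ≠ 0`, and let `s_{k₁} ⋯ s_{k_m}` be a reduced expression of
`ω = λ u₀⁻¹`. Then `U_{k₁} ∘ ⋯ ∘ U_{k_m} (w) = c_{u₀} • e_λ`. In particular,
every nonzero invariant subspace of `V` contains `e_λ`. -/
theorem stmt11 (K : Type*) [Field K] {n r : ℕ} (hn : 1 ≤ n) (μ : ℕ → ℕ)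
    (hpos : ∀ t < r, 1 ≤ μ t) (hsum : off μ r = n)
    (U : ℕ → ((DmuSub n r μ → K) →ₗ[K] (DmuSub n r μ → K)))
    (hU : IsUFamily K n r μ U)
    (lam : Equiv.Perm (Fin n)) (hlam : lam ∈ Dmu n r μ)
    (hmax : ∀ u ∈ Dmu n r μ, u ≠ lam → permLen u < permLen lam)
    (w : DmuSub n r μ → K) (u₀ : DmuSub n r μ) (hc : w u₀ ≠ 0)
    (hmin : ∀ v : DmuSub n r μ, w v ≠ 0 → permLen u₀.1 ≤ permLen v.1)
    (L : List ℕ) (hLk : ∀ k ∈ L, k + 1 < n)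
    (hLprod : (L.map (adjSwap n)).prod = lam * u₀.1⁻¹)
    (hLred : L.length = permLen (lam * u₀.1⁻¹)) :
    L.foldr (fun k v => U k v) w =
      w u₀ • (Pi.single (⟨lam, hlam⟩ : DmuSub n r μ) (1 : K) : DmuSub n r μ → K) ∧
    ∀ W : Submodule K (DmuSub n r μ → K),
      (∀ k, k + 1 < n → ∀ v ∈ W, U k v ∈ W) → W ≠ ⊥ →
      Pi.single (⟨lam, hlam⟩ : DmuSub n r μ) (1 : K) ∈ W :=
  stmt11_general K μ U hU lam hlam hmax w u₀ hmin L hLk hLprod hLred
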